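/- arXiv:2412.10790 — 2 statements merged into one kernel-verified Lean document; each statement's English description precedes it below -/
import Mathlib

section
/- With 𝔭, 𝔮 continuous positive functions on the torus summing to 1, if h(z) = 𝔭(z)/𝔮(R_α z) and a Borel probability measure μ satisfies the quasi-invariance equation R_{-α}^* μ = h μ (meaning ∫ φ d(R_{-α}^* μ) = ∫ φ h dμ for all continuous φ), then μ is a stationary measure for the Markov operator P, i.e. Pμ = μ. -/
/-!
Testing `Pμ` against a continuous `φ` gives `∫ p · φ(z + α) dμ + ∫ q · φ(z - α) dμ`.
The quasi-invariance equation, applied to the test functions `φ · (q ∘ R_α)` and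
`(φ ∘ R_α) · (q ∘ R_α)`, turns these two terms into `∫ φ p dμ` and `∫ φ q dμ`, which add up to
`∫ φ dμ` since `p + q = 1`. Finite Borel measures on the torus are determined by such integrals.
-/

open MeasureTheory

/-- The d-dimensional torus. -/
abbrev Td (d : ℕ) := Fin d → AddCircle (1 : ℝ)

section
variable {G : Type*} [MeasurableSpace G] [AddGroup G] [MeasurableAdd G] {μ : Measure G}

lemma integral_map_add_withDensity_ofReal {ρ : G → ℝ} (hρ : Measurable ρ) (hρ0 : 0 ≤ ρ)
    (a : G) {φ : G → ℝ} (hφ : StronglyMeasurable φ) :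
    ∫ z, φ z ∂((μ.withDensity fun z => ENNReal.ofReal (ρ z)).map (· + a)) =
      ∫ z, ρ z * φ (z + a) ∂μ := by
  rw [integral_map (measurable_add_const a).aemeasurable hφ.aestronglyMeasurable,
    integral_withDensity_eq_integral_toReal_smul hρ.ennreal_ofReal
      (.of_forall fun _ => ENNReal.ofReal_lt_top)]
  simp only [ENNReal.toReal_ofReal (hρ0 _), smul_eq_mul]

end

section
variable {G : Type*} [TopologicalSpace G] [AddGroup G] [IsTopologicalAddGroup G]
  [MeasurableSpace G] [BorelSpace G] {μ : Measure G} {α : G} {p q : C(G, ℝ)}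

lemma integral_comp_add_neg_mul_of_quasiInvariant (hq : ∀ z, q z ≠ 0)
    (hqi : ∀ φ : C(G, ℝ),
      ∫ z, φ z ∂(μ.map (· + (-α))) = ∫ z, φ z * (p z / q (z + α)) ∂μ)
    {φ : G → ℝ} (hφ : Continuous φ) :
    ∫ z, φ (z + -α) * q z ∂μ = ∫ z, φ z * p z ∂μ := by
  have h := hqi ⟨fun z => φ z * q (z + α), by fun_prop⟩
  rw [integral_map (measurable_add_const _).aemeasurable
    (ContinuousMap.continuous _).aestronglyMeasurable] at h
  simp only [ContinuousMap.coe_mk, neg_add_cancel_right] at h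
  rw [h]
  congr 1 with z
  field_simp [hq (z + α)]

end

/-- If `μ` solves the quasi-invariance equation `R_{-α}^* μ = (𝔭/(𝔮∘R_α)) μ`,
then `μ` is a stationary measure for the EVP Markov operator `P`. -/
theorem stmt2 (d : ℕ) (α : Td d) (p q : C(Td d, ℝ))
    (hp : ∀ z, p z ∈ Set.Ioo (0 : ℝ) 1) (hq : ∀ z, q z ∈ Set.Ioo (0 : ℝ) 1)
    (hpq : ∀ z, p z + q z = 1)
    (μ : Measure (Td d)) [IsProbabilityMeasure μ]
    (hqi : ∀ φ : C(Td d, ℝ),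
      ∫ z, φ z ∂(μ.map (· + (-α))) = ∫ z, φ z * (p z / q (z + α)) ∂μ) :
    (μ.withDensity fun z => ENNReal.ofReal (p z)).map (· + α) +
      (μ.withDensity fun z => ENNReal.ofReal (q z)).map (· + (-α)) = μ := by
  have integrable {f : Td d → ℝ} (hf : Continuous f) : Integrable f μ :=
    hf.integrable_of_hasCompactSupport (.of_compactSpace f)
  have := isFiniteMeasure_withDensity_ofReal (integrable p.continuous).2
  have := isFiniteMeasure_withDensity_ofReal (integrable q.continuous).2
  refine ext_of_forall_integral_eq_of_IsFiniteMeasure fun φ => ?_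
  have hq0 z : q z ≠ 0 := (hq z).1.ne'
  have backward := integral_comp_add_neg_mul_of_quasiInvariant hq0 hqi φ.continuous
  have forward := integral_comp_add_neg_mul_of_quasiInvariant hq0 hqi
    (φ.continuous.comp (continuous_add_const α))
  simp only [Function.comp_apply, neg_add_cancel_right] at forward
  rw [integral_add_measure (φ.integrable _) (φ.integrable _),
    integral_map_add_withDensity_ofReal p.measurable (fun z => (hp z).1.le) _
      φ.continuous.stronglyMeasurable,
    integral_map_add_withDensity_ofReal q.measurable (fun z => (hq z).1.le) _
      φ.continuous.stronglyMeasurable]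
  calc ∫ z, p z * φ (z + α) ∂μ + ∫ z, q z * φ (z + -α) ∂μ
      = ∫ z, φ z * q z ∂μ + ∫ z, φ z * p z ∂μ := by
        simp only [mul_comm (p _), mul_comm (q _), forward, backward]
    _ = ∫ z, φ z ∂μ := by
        rw [← integral_add (integrable (by fun_prop)) (integrable (by fun_prop))]
        simp only [← mul_add, add_comm (q _), hpq, mul_one]
end

section
/- Let (X, F, P, σ) be an invertible ergodic measure-preserving system and ρ ∈ L¹(P) with ∫ ρ dP = 0. Then P(min_{1≤j≤n} S_{−j}ρ > 0) → 0 as n → ∞, where S_{−j}ρ(x) = ρ(σ^{-1}x) + ... + ρ(σ^{-j}x). -/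
/-!
Let `E` be the set where all Birkhoff sums `S_n g`, `n ≥ 1`, of a zero-mean `g` are positive,
and suppose `μ E > 0`. By Poincaré recurrence almost every point of `E` returns to `E`, and the
sum `S_r g` up to the first return time `r` is positive there. On the other hand, the Kac tower
over `E` covers almost all of `X` by ergodicity, so Kac's argument gives `∫_E S_r g = ∫ g = 0`.
To avoid infinite sums, the tower is truncated at height `K`: the truncated sums are nonnegative,
their integrals tend to `∫ g = 0`, and Fatou's lemma yields the contradiction. The theorem
follows by applying this to `e⁻¹` and using continuity of `μ` along the decreasing sets
`{S_j > 0 for 1 ≤ j ≤ n}`.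
-/

open MeasureTheory Filter Set Function Topology

section

variable {X : Type*} [MeasurableSpace X] {μ : Measure X}

theorem ae_forall_tendsto_eq_zero_of_tendsto_integral {f : ℕ → X → ℝ}
    (hf_meas : ∀ n, Measurable (f n)) (hf_int : ∀ n, Integrable (f n) μ)
    (hf_nonneg : ∀ n x, 0 ≤ f n x) (h : Tendsto (fun n => ∫ x, f n x ∂μ) atTop (𝓝 0)) :
    ∀ᵐ x ∂μ, ∀ c, Tendsto (fun n => f n x) atTop (𝓝 c) → c = 0 := by
  have hlint : ∫⁻ x, liminf (fun n => ENNReal.ofReal (f n x)) atTop ∂μ = 0 := by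
    refine le_antisymm ?_ zero_le
    refine (lintegral_liminf_le' fun n => (hf_meas n).ennreal_ofReal.aemeasurable).trans_eq ?_
    simp_rw [← ofReal_integral_eq_lintegral_ofReal (hf_int _) (.of_forall (hf_nonneg _))]
    simpa using (ENNReal.tendsto_ofReal h).liminf_eq
  filter_upwards [(lintegral_eq_zero_iff
    (Measurable.liminf fun n => (hf_meas n).ennreal_ofReal)).1 hlint] with x hx c hc
  have hc0 : ENNReal.ofReal c = 0 := (ENNReal.tendsto_ofReal hc).liminf_eq.symm.trans hx
  exact le_antisymm (ENNReal.ofReal_eq_zero.1 hc0) (ge_of_tendsto' hc (hf_nonneg · x))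

theorem Ergodic.ae_exists_iterate_mem [IsFiniteMeasure μ] {f : X → X} (hf : Ergodic f μ)
    {s : Set X} (hs : MeasurableSet s) (h0 : μ s ≠ 0) : ∀ᵐ x ∂μ, ∃ n, f^[n] x ∈ s := by
  set U := ⋃ n, f^[n] ⁻¹' s
  have hU_inv : f ⁻¹' U ⊆ U := fun x hx => by
    obtain ⟨n, hn⟩ := mem_iUnion.1 hx
    exact mem_iUnion.2 ⟨n + 1, by rwa [mem_preimage, iterate_succ_apply]⟩
  rcases hf.ae_empty_or_univ_of_preimage_ae_le
      (MeasurableSet.iUnion fun n => hs.preimage (hf.measurable.iterate n)).nullMeasurableSet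
      hU_inv.eventuallyLE with h | h
  · exact absurd (measure_mono_null (subset_iUnion (fun n => f^[n] ⁻¹' s) 0)
      ((measure_congr h).trans measure_empty)) h0
  · have hU : ∀ᵐ x ∂μ, x ∈ U := ae_eq_univ.1 h
    exact hU.mono fun x hx => mem_iUnion.1 hx

namespace MeasurableEquiv

theorem symm_iterate_iterate_of_le (e : X ≃ᵐ X) {i k : ℕ} (h : i ≤ k) (x : X) :
    e.symm^[i] (e^[k] x) = e^[k - i] x := by
  obtain ⟨j, rfl⟩ := Nat.exists_eq_add_of_le h
  rw [Nat.add_sub_cancel_left, iterate_add_apply, LeftInverse.iterate e.symm_apply_apply i]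

variable (e : X ≃ᵐ X) (E : Set X)

/-- The `k`-th floor of the Kac tower over `E`: the points whose backward orbit first enters `E`
at time `k`. -/
def kacFloor (k : ℕ) : Set X := disjointed (fun j => e.symm^[j] ⁻¹' E) k

/-- On `E`, this is the Birkhoff sum of `g` up to time `min K r`, where `r` is the first return
time to `E`. -/
noncomputable def kacTowerSum (g : X → ℝ) (K : ℕ) (x : X) : ℝ :=
  ∑ k ∈ Finset.range K, (e.kacFloor E k).indicator g (e^[k] x)

variable {E}

theorem measurableSet_kacFloor (hE : MeasurableSet E) (k : ℕ) :
    MeasurableSet (e.kacFloor E k) :=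
  MeasurableSet.disjointed (fun j => hE.preimage (e.symm.measurable.iterate j)) k

variable {e} {g : X → ℝ}

theorem iterate_mem_kacFloor_iff {k : ℕ} {x : X} :
    e^[k] x ∈ e.kacFloor E k ↔ x ∈ E ∧ ∀ i, 0 < i → i ≤ k → e^[i] x ∉ E := by
  simp only [kacFloor, disjointed_eq_inter_compl, mem_inter_iff, mem_preimage, mem_iInter,
    mem_compl_iff, e.symm_iterate_iterate_of_le le_rfl, Nat.sub_self, iterate_zero_apply]
  refine and_congr_right fun _ => ⟨fun h i hi hik => ?_, fun h j hj => ?_⟩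
  · have := h (k - i) (by omega)
    rwa [e.symm_iterate_iterate_of_le (by omega), Nat.sub_sub_self hik] at this
  · rw [e.symm_iterate_iterate_of_le hj.le]
    exact h (k - j) (by omega) (by omega)

theorem iUnion_kacFloor : ⋃ k, e.kacFloor E k = ⋃ k, e.symm^[k] ⁻¹' E :=
  iUnion_disjointed

theorem measurable_kacTowerSum (hE : MeasurableSet E) (hg : Measurable g) (K : ℕ) :
    Measurable (e.kacTowerSum E g K) :=
  Finset.measurable_sum _ fun k _ =>
    (hg.indicator (measurableSet_kacFloor e hE k)).comp (e.measurable.iterate k)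

theorem integral_indicator_kacFloor_iterate (hμ : MeasurePreserving e μ μ) (hE : MeasurableSet E)
    (hg : AEStronglyMeasurable g μ) (k : ℕ) :
    ∫ x, (e.kacFloor E k).indicator g (e^[k] x) ∂μ = ∫ x in e.kacFloor E k, g x ∂μ := by
  have h := integral_map (hμ.iterate k).measurable.aemeasurable
    ((hμ.iterate k).map_eq ▸ hg.indicator (measurableSet_kacFloor e hE k))
  rw [(hμ.iterate k).map_eq] at h
  rw [← h, integral_indicator (measurableSet_kacFloor e hE k)]

theorem integrable_kacTowerSum (hμ : MeasurePreserving e μ μ) (hE : MeasurableSet E)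
    (hg : Integrable g μ) (K : ℕ) : Integrable (e.kacTowerSum E g K) μ :=
  integrable_finsetSum _ fun k _ =>
    (hμ.iterate k).integrable_comp_of_integrable (hg.indicator (measurableSet_kacFloor e hE k))

theorem integral_kacTowerSum (hμ : MeasurePreserving e μ μ) (hE : MeasurableSet E)
    (hg : Integrable g μ) (K : ℕ) :
    ∫ x, e.kacTowerSum E g K x ∂μ = ∑ k ∈ Finset.range K, ∫ x in e.kacFloor E k, g x ∂μ := by
  refine (integral_finsetSum _ fun k _ => (hμ.iterate k).integrable_comp_of_integrable
    (hg.indicator (measurableSet_kacFloor e hE k))).trans ?_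
  exact Finset.sum_congr rfl fun k _ =>
    integral_indicator_kacFloor_iterate hμ hE hg.aestronglyMeasurable k

theorem tendsto_integral_kacTowerSum [IsFiniteMeasure μ] (he : Ergodic e μ)
    (hE : MeasurableSet E) (hE0 : μ E ≠ 0) (hg : Integrable g μ) :
    Tendsto (fun K => ∫ x, e.kacTowerSum E g K x ∂μ) atTop (𝓝 (∫ x, g x ∂μ)) := by
  have htower : ∀ᵐ x ∂μ, x ∈ ⋃ k, e.kacFloor E k := by
    filter_upwards [he.symm.ae_exists_iterate_mem hE hE0] with x hx
    rwa [iUnion_kacFloor, mem_iUnion]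
  simp_rw [integral_kacTowerSum he.toMeasurePreserving hE hg]
  have := (hasSum_integral_iUnion (measurableSet_kacFloor e hE) (disjoint_disjointed _)
    hg.integrableOn).tendsto_sum_nat
  rwa [Measure.restrict_eq_self_of_ae_mem htower] at this

theorem kacTowerSum_of_notMem {x : X} (hx : x ∉ E) (K : ℕ) : e.kacTowerSum E g K x = 0 :=
  Finset.sum_eq_zero fun _ _ =>
    indicator_of_notMem (fun h => hx (iterate_mem_kacFloor_iff.1 h).1) _

theorem kacTowerSum_eq_birkhoffSum {x : X} {K : ℕ} (hx : x ∈ E)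
    (h : ∀ i, 0 < i → i < K → e^[i] x ∉ E) : e.kacTowerSum E g K x = birkhoffSum e g K x :=
  Finset.sum_congr rfl fun _ hk => indicator_of_mem (iterate_mem_kacFloor_iff.2
    ⟨hx, fun i hi hik => h i hi (hik.trans_lt (Finset.mem_range.1 hk))⟩) _

theorem kacTowerSum_eq_of_iterate_mem {x : X} {r K : ℕ} (hr : 0 < r) (hrE : e^[r] x ∈ E)
    (hrK : r ≤ K) : e.kacTowerSum E g K x = e.kacTowerSum E g r x := by
  refine (Finset.sum_subset (Finset.range_mono hrK) fun k _ hk => ?_).symm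
  exact indicator_of_notMem (fun h => iterate_mem_kacFloor_iff.1 h |>.2 r hr
    (by simpa using hk) hrE) _

theorem kacTowerSum_pos {x : X} (hx : x ∈ E)
    (hpos : ∀ n, 0 < n → 0 < birkhoffSum e g n x) {K : ℕ} (hK : 0 < K) : 0 < e.kacTowerSum E g K x := by
  induction K with
  | zero => exact absurd hK (lt_irrefl 0)
  | succ K ih =>
    by_cases hKx : e^[K] x ∈ e.kacFloor E K
    · rw [kacTowerSum_eq_birkhoffSum hx fun i hi hiK =>
        (iterate_mem_kacFloor_iff.1 hKx).2 i hi (by omega)]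
      exact hpos _ hK
    · rcases K.eq_zero_or_pos with rfl | hK'
      · exact absurd (iterate_mem_kacFloor_iff.2 ⟨hx, fun i hi hi' => by omega⟩) hKx
      · rw [kacTowerSum, Finset.sum_range_succ, indicator_of_notMem hKx, add_zero]
        exact ih hK'

theorem kacTowerSum_nonneg (hpos : ∀ y ∈ E, ∀ n, 0 < n → 0 < birkhoffSum e g n y) (K : ℕ)
    (x : X) : 0 ≤ e.kacTowerSum E g K x := by
  by_cases hx : x ∈ E
  · rcases K.eq_zero_or_pos with rfl | hK
    · simp [kacTowerSum]
    · exact (kacTowerSum_pos hx (hpos x hx) hK).le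
  · exact (kacTowerSum_of_notMem hx K).ge

end MeasurableEquiv

theorem measurableSet_forall_birkhoffSum_pos {f : X → X} {g : X → ℝ} (hf : Measurable f)
    (hg : Measurable g) (p : ℕ → Prop) :
    MeasurableSet {x | ∀ n, p n → 0 < birkhoffSum f g n x} := by
  simp only [ofPred_forall]
  exact .iInter fun n => .iInter fun _ => measurableSet_lt measurable_const
    (Finset.measurable_sum _ fun k _ => hg.comp (hf.iterate k))

namespace Ergodic

variable [IsFiniteMeasure μ] {e : X ≃ᵐ X} {g : X → ℝ}

theorem measure_setOf_forall_birkhoffSum_pos_eq_zero (he : Ergodic e μ) (hgm : Measurable g)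
    (hg : Integrable g μ) (hg0 : ∫ x, g x ∂μ = 0) :
    μ {x | ∀ n, 0 < n → 0 < birkhoffSum e g n x} = 0 := by
  set E := {x | ∀ n, 0 < n → 0 < birkhoffSum e g n x}
  have hE : MeasurableSet E := measurableSet_forall_birkhoffSum_pos e.measurable hgm _
  by_contra hE0
  have hlim := ae_forall_tendsto_eq_zero_of_tendsto_integral
    (MeasurableEquiv.measurable_kacTowerSum hE hgm)
    (MeasurableEquiv.integrable_kacTowerSum he.toMeasurePreserving hE hg)
    (MeasurableEquiv.kacTowerSum_nonneg fun _ hy => hy)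
    (hg0 ▸ MeasurableEquiv.tendsto_integral_kacTowerSum he hE hE0 hg)
  have hrec := he.toMeasurePreserving.conservative.ae_mem_imp_frequently_image_mem
    hE.nullMeasurableSet
  refine hE0 (measure_eq_zero_iff_ae_notMem.2 ?_)
  filter_upwards [hlim, hrec] with x hx_lim hx_rec hxE
  obtain ⟨r, hr, hrE⟩ := (hx_rec hxE).forall_exists_of_atTop 1
  refine (MeasurableEquiv.kacTowerSum_pos hxE hxE hr).ne' (hx_lim _ ?_)
  exact tendsto_atTop_of_eventually_const fun K hK =>
    MeasurableEquiv.kacTowerSum_eq_of_iterate_mem hr hrE hK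

theorem tendsto_measure_forall_birkhoffSum_pos (he : Ergodic e μ) (hg : Integrable g μ)
    (hg0 : ∫ x, g x ∂μ = 0) :
    Tendsto (fun n => μ {x | ∀ j ∈ Finset.Icc 1 n, 0 < birkhoffSum e g j x}) atTop (𝓝 0) := by
  set g' := hg.1.mk g
  have hgg' : ∀ᵐ x ∂μ, ∀ j, birkhoffSum e g j x = birkhoffSum e g' j x :=
    ae_all_iff.2 fun j =>
      he.quasiMeasurePreserving.birkhoffSum_ae_eq_of_ae_eq hg.1.ae_eq_mk j
  have hg'm : Measurable g' := hg.1.stronglyMeasurable_mk.measurable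
  set C := fun n => {x | ∀ j ∈ Finset.Icc 1 n, 0 < birkhoffSum e g' j x}
  have hC : ∀ n, MeasurableSet (C n) := fun n =>
    measurableSet_forall_birkhoffSum_pos e.measurable hg'm _
  have hC_anti : Antitone C := fun m n hmn x hx j hj =>
    hx j (Finset.Icc_subset_Icc_right hmn hj)
  have hC_inter : ⋂ n, C n = {x | ∀ n, 0 < n → 0 < birkhoffSum e g' n x} := by
    ext x
    simp only [C, mem_iInter, mem_ofPred_eq, Finset.mem_Icc]
    exact ⟨fun h n hn => h n n ⟨hn, le_rfl⟩, fun h n j hj => h j hj.1⟩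
  have hlim := tendsto_measure_iInter_atTop (fun n => (hC n).nullMeasurableSet) hC_anti
    ⟨0, measure_ne_top μ _⟩
  rw [hC_inter, he.measure_setOf_forall_birkhoffSum_pos_eq_zero hg'm
    (hg.congr hg.1.ae_eq_mk) ((integral_congr_ae hg.1.ae_eq_mk).symm.trans hg0)] at hlim
  refine hlim.congr fun n => measure_congr (eventuallyEq_set.2 ?_)
  filter_upwards [hgg'] with x hx
  simp only [C, mem_ofPred_eq, hx]

end Ergodic

end

/-- For an invertible ergodic measure-preserving system and `ρ ∈ L¹` with zero mean, the
probability that all backward Birkhoff sums `S_{-j}ρ`, `1 ≤ j ≤ n`, are strictly positive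
tends to `0` as `n → ∞`. -/
theorem stmt13 {X : Type*} [MeasurableSpace X] (P : Measure X) [IsProbabilityMeasure P]
    (e : X ≃ᵐ X) (herg : Ergodic (⇑e) P)
    (ρ : X → ℝ) (hρ : Integrable ρ P) (hmean : ∫ x, ρ x ∂P = 0) :
    Tendsto
      (fun n : ℕ => P {x | ∀ j ∈ Finset.Icc 1 n,
        0 < ∑ i ∈ Finset.range j, ρ ((⇑e.symm)^[i + 1] x)})
      atTop (nhds 0) := by
  have hpre : ∀ n : ℕ, {x | ∀ j ∈ Finset.Icc 1 n,
      0 < ∑ i ∈ Finset.range j, ρ ((⇑e.symm)^[i + 1] x)} =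
      e.symm ⁻¹' {y | ∀ j ∈ Finset.Icc 1 n, 0 < birkhoffSum e.symm ρ j y} := fun n => by
    ext x
    simp only [mem_preimage, mem_ofPred_eq, birkhoffSum, iterate_succ_apply]
  simp_rw [hpre, herg.symm.toMeasurePreserving.measure_preimage_equiv]
  exact herg.symm.tendsto_measure_forall_birkhoffSum_pos hρ hmean
end
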